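/- If v : ℝ → ℝ is continuously differentiable on (0,∞) with v′ nonincreasing on (0,∞), v′(b*) = 1 for some b* > 0, and 0 ≤ v′ ≤ β on (0,∞), then for every x ≥ 0: max over l ∈ [0,x] of (l + v(x−l) − v(x)) equals 0 if x ∈ [0, b*], and equals x − b* + v(b*) − v(x) if x > b*. -/

import Mathlib

/-!
Writing `w y = v y - y`, the gain of paying `l` from level `x` is `w (x - l) - w x`, so the
problem is to maximise `w` over `[0, x]`. Since `w' = v' - 1` and `v'` is nonincreasing with
`v' b* = 1`, `w` increases on `[0, b*]` and decreases on `[b*, ∞)`: its maximum over `[0, x]` is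
at `x` when `x ≤ b*` and at `b*` otherwise.
-/

open Set

theorem monotoneOn_sub_id_of_one_le_deriv {D : Set ℝ} (hD : Convex ℝ D) {f f' : ℝ → ℝ}
    (hf : ContinuousOn f D) (hf' : ∀ x ∈ interior D, HasDerivAt f (f' x) x)
    (hle : ∀ x ∈ interior D, 1 ≤ f' x) : MonotoneOn (fun x => f x - x) D :=
  monotoneOn_of_hasDerivWithinAt_nonneg (f' := fun x => f' x - 1) hD (hf.sub continuousOn_id)
    (fun x hx => ((hf' x hx).sub (hasDerivAt_id x)).hasDerivWithinAt)
    (fun x hx => sub_nonneg.2 (hle x hx))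

theorem antitoneOn_sub_id_of_deriv_le_one {D : Set ℝ} (hD : Convex ℝ D) {f f' : ℝ → ℝ}
    (hf : ContinuousOn f D) (hf' : ∀ x ∈ interior D, HasDerivAt f (f' x) x)
    (hle : ∀ x ∈ interior D, f' x ≤ 1) : AntitoneOn (fun x => f x - x) D :=
  antitoneOn_of_hasDerivWithinAt_nonpos (f' := fun x => f' x - 1) hD (hf.sub continuousOn_id)
    (fun x hx => ((hf' x hx).sub (hasDerivAt_id x)).hasDerivWithinAt)
    (fun x hx => sub_nonpos.2 (hle x hx))

section DividendBarrier

variable {v v' : ℝ → ℝ} {b : ℝ}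

theorem monotoneOn_sub_id_Icc (hcont : ContinuousOn v (Ici 0))
    (hderiv : ∀ x > 0, HasDerivAt v (v' x) x) (hanti : AntitoneOn v' (Ioi 0)) (hslope : v' b = 1) :
    MonotoneOn (fun y => v y - y) (Icc 0 b) := by
  refine monotoneOn_sub_id_of_one_le_deriv (f' := v') (convex_Icc 0 b)
    (hcont.mono Icc_subset_Ici_self) ?_ ?_ <;> rw [interior_Icc] <;> intro y hy
  · exact hderiv y hy.1
  · exact hslope ▸ hanti hy.1 (hy.1.trans hy.2) hy.2.le

theorem antitoneOn_sub_id_Ici (hb : 0 < b) (hcont : ContinuousOn v (Ici 0))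
    (hderiv : ∀ x > 0, HasDerivAt v (v' x) x) (hanti : AntitoneOn v' (Ioi 0)) (hslope : v' b = 1) :
    AntitoneOn (fun y => v y - y) (Ici b) := by
  refine antitoneOn_sub_id_of_deriv_le_one (f' := v') (convex_Ici b)
    (hcont.mono (Ici_subset_Ici.2 hb.le)) ?_ ?_ <;> rw [interior_Ici] <;> intro y (hy : b < y)
  · exact hderiv y (hb.trans hy)
  · exact hslope ▸ hanti hb (hb.trans hy) (le_of_lt hy)

theorem isMaxOn_sub_id (hb : 0 < b) (hcont : ContinuousOn v (Ici 0))
    (hderiv : ∀ x > 0, HasDerivAt v (v' x) x) (hanti : AntitoneOn v' (Ioi 0)) (hslope : v' b = 1) :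
    IsMaxOn (fun y => v y - y) (Ici 0) b := by
  intro y (hy : 0 ≤ y)
  rcases le_total y b with hyb | hby
  · exact monotoneOn_sub_id_Icc hcont hderiv hanti hslope ⟨hy, hyb⟩ ⟨hb.le, le_rfl⟩ hyb
  · exact antitoneOn_sub_id_Ici hb hcont hderiv hanti hslope self_mem_Ici hby hby

end DividendBarrier

theorem isGreatest_dividend_gain {v : ℝ → ℝ} {x m : ℝ} (hm : m ∈ Icc 0 x)
    (hmax : ∀ y ∈ Icc 0 x, v y - y ≤ v m - m) :
    IsGreatest ((fun l => l + v (x - l) - v x) '' Icc 0 x) (x - m + v m - v x) := by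
  refine ⟨⟨x - m, ⟨by linarith [hm.2], by linarith [hm.1]⟩, by simp⟩, ?_⟩
  rintro _ ⟨l, hl, rfl⟩
  have := hmax (x - l) ⟨by linarith [hl.2], by linarith [hl.1]⟩
  dsimp only
  linarith

theorem max_dividend_payment_general
    (bstar : ℝ) (hbstar : 0 < bstar)
    (v v' : ℝ → ℝ)
    (hcont : ContinuousOn v (Set.Ici 0))
    (hderiv : ∀ x > 0, HasDerivAt v (v' x) x)
    (hanti : AntitoneOn v' (Set.Ioi 0))
    (hslope : v' bstar = 1) :
    ∀ x ≥ 0,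
      (x ≤ bstar →
        IsGreatest ((fun l => l + v (x - l) - v x) '' Set.Icc 0 x) 0) ∧
      (bstar < x →
        IsGreatest ((fun l => l + v (x - l) - v x) '' Set.Icc 0 x)
          (x - bstar + v bstar - v x)) := by
  intro x hx
  refine ⟨fun hxb => ?_, fun hbx => ?_⟩
  · have hmono := monotoneOn_sub_id_Icc hcont hderiv hanti hslope
    simpa using isGreatest_dividend_gain (v := v) ⟨hx, le_rfl⟩ fun y hy =>
      hmono ⟨hy.1, hy.2.trans hxb⟩ ⟨hx, hxb⟩ hy.2
  · exact isGreatest_dividend_gain ⟨hbstar.le, hbx.le⟩ fun y hy =>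
      isMaxOn_sub_id hbstar hcont hderiv hanti hslope (show y ∈ Ici 0 from hy.1)

/-- The maximizer of l ↦ l + v(x−l) − v(x) over [0,x]: 0 if x ≤ b*,
    and l = x − b* if x > b*. -/
theorem max_dividend_payment
    (β bstar : ℝ) (hβ : 1 < β) (hbstar : 0 < bstar)
    (v v' : ℝ → ℝ)
    (hcont : ContinuousOn v (Set.Ici 0))
    (hderiv : ∀ x > 0, HasDerivAt v (v' x) x)
    (hderiv_cont : ContinuousOn v' (Set.Ioi 0))
    (hanti : AntitoneOn v' (Set.Ioi 0))
    (hslope : v' bstar = 1)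
    (hbounds : ∀ x > 0, 0 ≤ v' x ∧ v' x ≤ β) :
    ∀ x ≥ 0,
      (x ≤ bstar →
        IsGreatest ((fun l => l + v (x - l) - v x) '' Set.Icc 0 x) 0) ∧
      (bstar < x →
        IsGreatest ((fun l => l + v (x - l) - v x) '' Set.Icc 0 x)
          (x - bstar + v bstar - v x)) :=
  max_dividend_payment_general bstar hbstar v v' hcont hderiv hanti hslope
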